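/- For every n ≥ 2 and every W-path w of order n, the word Φ(w) obtained by applying the transformation table φ to the T_n consecutive pairs of the supplemented word 0·w·0 is an S-path of order n. -/

import Mathlib

/-- The unit vector in direction `d·π/3`, viewing the plane as `ℂ`. -/
noncomputable def dirU (d : Fin 6) : ℂ :=
  Complex.exp ((d : ℕ) * Real.pi / 3 * Complex.I)

/-- The position sequence of a direction word: `p₀ = 0`, `p_{m+1} = p_m + dirU (ds_m)`. -/
noncomputable def posSeq (ds : List (Fin 6)) (m : ℕ) : ℂ :=
  ((ds.take m).map dirU).sum

/-- The grid point `P(i,j) = i·u(0) + j·u(1)`. -/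
noncomputable def Pt (i j : ℕ) : ℂ := (i : ℂ) * dirU 0 + (j : ℂ) * dirU 1

/-- The triangular number `T_n = n(n+1)/2`. -/
def triNum (n : ℕ) : ℕ := n * (n + 1) / 2

/-- The inscribed grid `G_n = {P(i,j) : i + j ≤ n - 1}`. -/
def inscribedGrid (n : ℕ) : Set ℂ := {p | ∃ i j : ℕ, i + j ≤ n - 1 ∧ p = Pt i j}

/-- An H-path of order `n`: a direction word of length `T_n - 1` whose position sequence
is injective with image `G_n`, starting at `P(0,0) = 0` and ending at `P(n-1,0)`. -/
def IsHPath (n : ℕ) (w : List (Fin 6)) : Prop :=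
  w.length = triNum n - 1 ∧
  (Function.Injective fun m : Fin (w.length + 1) => posSeq w m) ∧
  (Set.range fun m : Fin (w.length + 1) => posSeq w m) = inscribedGrid n ∧
  posSeq w 0 = Pt 0 0 ∧
  posSeq w w.length = Pt (n - 1) 0

/-- `(a, b)` is a forbidden turn if `b ≡ a + 4 (mod 6)` with `a` even, or
`b ≡ a + 2 (mod 6)` with `a` odd (addition in `Fin 6` is mod 6). -/
def ForbiddenTurn (a b : Fin 6) : Prop :=
  (Even (a : ℕ) ∧ b = a + 4) ∨ (Odd (a : ℕ) ∧ b = a + 2)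

/-- A W-path of order `n`: an H-path whose supplemented word `0·w·0` contains no
forbidden turn among its consecutive pairs. -/
def IsWPath (n : ℕ) (w : List (Fin 6)) : Prop :=
  IsHPath n w ∧ List.Chain' (fun a b => ¬ ForbiddenTurn a b) ((0 : Fin 6) :: (w ++ [0]))

/-- The `m`-th edge of a direction word: the closed segment `[p_m, p_{m+1}]`. -/
noncomputable def edgeSeg (s : List (Fin 6)) (m : ℕ) : Set ℂ :=
  segment ℝ (posSeq s m) (posSeq s (m + 1))

/-- `e` is a side of the dark (upward) tile `Δ(i,j)`, i.e. one of its three closed edges. -/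
def IsSideOf (e : Set ℂ) (i j : ℕ) : Prop :=
  e = segment ℝ (Pt i j) (Pt (i + 1) j) ∨
  e = segment ℝ (Pt (i + 1) j) (Pt i (j + 1)) ∨
  e = segment ℝ (Pt i j) (Pt i (j + 1))

/-- An S-path of order `n`: a direction word of length `T_n` from `0` to `n·u(0)`,
whose edges are pairwise distinct sides of dark tiles, such that the assignment of
edges to dark tiles is a bijection onto the set of dark tiles (indexed by base points
`(i,j)` with `i + j ≤ n - 1`). -/
def IsSPath (n : ℕ) (s : List (Fin 6)) : Prop :=
  s.length = triNum n ∧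
  posSeq s 0 = 0 ∧
  posSeq s s.length = (n : ℂ) * dirU 0 ∧
  (∀ m m' : Fin s.length, edgeSeg s m = edgeSeg s m' → m = m') ∧
  ∃ t : Fin s.length → {p : ℕ × ℕ // p.1 + p.2 ≤ n - 1},
    (∀ m : Fin s.length, IsSideOf (edgeSeg s (m : ℕ)) (t m).1.1 (t m).1.2) ∧ Function.Bijective t

/-- The partial transformation table `φ` of Table 1. -/
def phiTable (a b : Fin 6) : Option (Fin 6) :=
  if a = 0 ∨ a = 1 then
    if b = 0 then some 0 else if b = 1 then some 1 else if b = 2 then some 1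
    else if b = 5 then some 0 else none
  else if a = 2 ∨ a = 3 then
    if b = 1 then some 2 else if b = 2 then some 2 else if b = 3 then some 3
    else if b = 4 then some 3 else none
  else
    if b = 0 then some 5 else if b = 3 then some 4 else if b = 4 then some 4
    else if b = 5 then some 5 else none

/-- The consecutive pairs of the supplemented word `0·w·0`. -/
def suppPairs (w : List (Fin 6)) : List (Fin 6 × Fin 6) :=
  ((0 : Fin 6) :: (w ++ [0])).zip (w ++ [0])

/-- `Φ(w)`: apply `φ` to the consecutive pairs of the supplemented word `0·w·0`
(using the default value `0` where `φ` is undefined). -/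
def PhiWord (w : List (Fin 6)) : List (Fin 6) :=
  (suppPairs w).map fun p => (phiTable p.1 p.2).getD 0

/-!
Let `a₀ a₁ … a_{L+1}` be the supplemented word `0·w·0` and `p₀, …, p_L` the vertices of the
H-path. With the offsets `tileOffset c ∈ {0, 1, ω}`, the table satisfies
`u(φ(a,b)) = u(b) + tileOffset b - tileOffset a` and `tileOffset (φ(a,b)) = tileOffset a`, so the
vertices of `Φ(w)` are `q_m = p_m + tileOffset a_m`, and the `m`-th edge, which leaves
`p_m + tileOffset c` in direction `c = φ(a_m, a_{m+1})`, is a side of the dark tile at `p_m`.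
As the H-path visits every grid point once, edge ↦ tile is a bijection; distinct tiles have
distinct sides, so the edges are distinct.

The table is undefined only at forbidden turns and at U-turns `b = a + 3`; the latter would make
the path `-1, p₀, …, p_L, P(n,0)` traced by the supplemented word revisit a point.
-/

local notation "ω" => dirU 1

lemma dirU_eq_pow (d : Fin 6) : dirU d = ω ^ (d : ℕ) := by
  rw [dirU, dirU, ← Complex.exp_nat_mul]
  congr 1
  rw [show ((1 : Fin 6) : ℕ) = 1 from rfl]
  push_cast
  ring

lemma dirU_one_eq : ω = 1 / 2 + (√3 / 2 : ℝ) * Complex.I := by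
  rw [dirU, show (((1 : Fin 6) : ℕ) : ℂ) * Real.pi / 3 = ((Real.pi / 3 : ℝ) : ℂ) by
      rw [show ((1 : Fin 6) : ℕ) = 1 from rfl]; push_cast; ring,
    Complex.exp_mul_I, ← Complex.ofReal_cos, ← Complex.ofReal_sin, Real.cos_pi_div_three,
    Real.sin_pi_div_three]
  push_cast
  ring

lemma dirU_one_im_pos : 0 < Complex.im ω := by
  rw [dirU_one_eq]
  simp

lemma dirU_one_sq : ω ^ 2 = ω - 1 := by
  have h3 : ((√3 : ℝ) : ℂ) ^ 2 = 3 := by norm_cast; simp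
  rw [dirU_one_eq]
  push_cast
  linear_combination (1 / 4 : ℂ) * Complex.I ^ 2 * h3 + (3 / 4 : ℂ) * Complex.I_sq

lemma dirU_zero : dirU 0 = 1 := by rw [dirU_eq_pow 0, Fin.val_zero, pow_zero]
lemma dirU_two : dirU 2 = ω - 1 := by
  rw [dirU_eq_pow _]; exact dirU_one_sq
lemma dirU_three : dirU 3 = -1 := by
  rw [dirU_eq_pow _]; show ω ^ 3 = -1; linear_combination (ω + 1) * dirU_one_sq
lemma dirU_four : dirU 4 = -ω := by
  rw [dirU_eq_pow _]; show ω ^ 4 = -ω; linear_combination (ω ^ 2 + ω) * dirU_one_sq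
lemma dirU_five : dirU 5 = 1 - ω := by
  rw [dirU_eq_pow _]; show ω ^ 5 = 1 - ω; linear_combination (ω ^ 3 + ω ^ 2 - 1) * dirU_one_sq

lemma dirU_add_three (c : Fin 6) : dirU (c + 3) = -dirU c := by
  fin_cases c <;> simp [dirU_zero, dirU_two, dirU_three, dirU_four, dirU_five]

lemma Pt_eq (i j : ℕ) : Pt i j = i + j * ω := by
  rw [Pt, dirU_zero, mul_one]

lemma Pt_inj {i j i' j' : ℕ} : Pt i j = Pt i' j' ↔ i = i' ∧ j = j' := by
  refine ⟨fun h => ?_, fun h => by rw [h.1, h.2]⟩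
  rw [Pt_eq, Pt_eq] at h
  have him := congrArg Complex.im h
  simp only [Complex.add_im, Complex.natCast_im, Complex.mul_im, Complex.natCast_re, zero_add,
    zero_mul, add_zero] at him
  have hj : j = j' := by exact_mod_cast mul_right_cancel₀ dirU_one_im_pos.ne' him
  subst hj
  exact ⟨by exact_mod_cast add_right_cancel h, rfl⟩

lemma Pt_add_one (i j : ℕ) : Pt i j + 1 = Pt (i + 1) j := by
  simp only [Pt_eq]; push_cast; ring

section Segment

variable {𝕜 E : Type*} [Field 𝕜] [LinearOrder 𝕜] [IsStrictOrderedRing 𝕜] [AddCommGroup E]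
  [Module 𝕜 E]

lemma left_mem_extremePoints_segment (x y : E) : x ∈ (segment 𝕜 x y).extremePoints 𝕜 := by
  refine ⟨left_mem_segment 𝕜 x y, ?_⟩
  rintro _ ⟨a₁, b₁, ha₁, hb₁, hab₁, rfl⟩ _ ⟨a₂, b₂, ha₂, hb₂, hab₂, rfl⟩ ⟨a, b, ha, hb, hab, h⟩
  obtain rfl | hxy := eq_or_ne x y
  · simp only [← add_smul, hab₁, one_smul]
  have hcomb : (a * b₁ + b * b₂) • (y - x) = 0 := by
    rw [← sub_eq_zero.mpr h]
    obtain rfl := eq_sub_of_add_eq hab₁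
    obtain rfl := eq_sub_of_add_eq hab₂
    obtain rfl := eq_sub_of_add_eq hab
    module
  have hsum := (smul_eq_zero.mp hcomb).resolve_right (sub_ne_zero.mpr hxy.symm)
  obtain rfl : b₁ = 0 := by nlinarith [mul_nonneg ha.le hb₁, mul_nonneg hb.le hb₂]
  obtain rfl : b₂ = 0 := by nlinarith [mul_nonneg ha.le hb₁, mul_nonneg hb.le hb₂]
  simp_all

lemma extremePoints_segment (x y : E) : (segment 𝕜 x y).extremePoints 𝕜 = {x, y} := by
  refine subset_antisymm ?_ ?_
  · rw [← convexHull_pair]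
    exact extremePoints_convexHull_subset
  · rintro z (rfl | rfl)
    · exact left_mem_extremePoints_segment z y
    · rw [segment_symm]
      exact left_mem_extremePoints_segment z x

lemma pair_eq_pair_of_segment_eq {x y x' y' : E} (h : segment 𝕜 x y = segment 𝕜 x' y') :
    ({x, y} : Set E) = {x', y'} := by
  rw [← extremePoints_segment (𝕜 := 𝕜), h, extremePoints_segment]

end Segment

lemma IsSideOf.unique {e : Set ℂ} {i j i' j' : ℕ} (h : IsSideOf e i j) (h' : IsSideOf e i' j') :
    i = i' ∧ j = j' := by
  rcases h with rfl | rfl | rfl <;> rcases h' with h' | h' | h' <;>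
    rcases Set.pair_eq_pair_iff.mp (pair_eq_pair_of_segment_eq h') with ⟨h₁, h₂⟩ | ⟨h₁, h₂⟩ <;>
    rw [Pt_inj] at h₁ h₂ <;> omega

noncomputable def tileOffset : Fin 6 → ℂ
  | 0 | 1 => 0
  | 2 | 3 => 1
  | 4 | 5 => ω

lemma isSideOf_step (c : Fin 6) (i j : ℕ) :
    IsSideOf (segment ℝ (Pt i j + tileOffset c) (Pt i j + tileOffset c + dirU c)) i j := by
  have hω : Pt i (j + 1) = Pt i j + ω := by simp only [Pt_eq]; push_cast; ring
  rw [IsSideOf, ← Pt_add_one, hω]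
  fin_cases c <;>
    simp only [tileOffset, Fin.reduceFinMk, dirU_zero, dirU_two, dirU_three, dirU_four, dirU_five]
  · exact Or.inl (by congr 1 <;> ring)
  · exact Or.inr (Or.inr (by congr 1 <;> ring))
  · exact Or.inr (Or.inl (by congr 1; ring))
  · exact Or.inl (by rw [segment_symm]; congr 1; ring)
  · exact Or.inr (Or.inr (by rw [segment_symm]; congr 1; ring))
  · exact Or.inr (Or.inl (by rw [segment_symm]; congr 1; ring))

lemma phiTable_isSome_or (a b : Fin 6) :
    (phiTable a b).isSome ∨ b = a + 3 ∨ ForbiddenTurn a b := by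
  unfold ForbiddenTurn
  revert a b
  decide

lemma dirU_phiTable {a b : Fin 6} (h : (phiTable a b).isSome) :
    dirU ((phiTable a b).getD 0) = dirU b + tileOffset b - tileOffset a := by
  fin_cases a <;> fin_cases b <;>
    simp_all [phiTable, tileOffset, dirU_zero, dirU_two, dirU_three, dirU_four, dirU_five]

lemma tileOffset_phiTable {a b : Fin 6} (h : (phiTable a b).isSome) :
    tileOffset ((phiTable a b).getD 0) = tileOffset a := by
  fin_cases a <;> fin_cases b <;> simp_all [phiTable, tileOffset]

lemma forall_mem_zip_tail_of_getElem {α : Type*} {R : α → α → Prop} {l : List α}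
    (h : ∀ k (hk : k + 1 < l.length), R l[k] l[k + 1]) : ∀ p ∈ l.zip l.tail, R p.1 p.2 := by
  intro p hp
  obtain ⟨k, hk, rfl⟩ := List.mem_iff_getElem.mp hp
  simp only [List.length_zip, List.length_tail, lt_min_iff] at hk
  simpa [List.getElem_zip, List.getElem_tail] using h k (by omega)

lemma posSeq_zero (s : List (Fin 6)) : posSeq s 0 = 0 := by
  simp [posSeq]

lemma posSeq_succ {s : List (Fin 6)} {m : ℕ} (hm : m < s.length) :
    posSeq s (m + 1) = posSeq s m + dirU s[m] := by
  rw [posSeq, posSeq, List.take_add_one, List.getElem?_eq_getElem hm, List.map_append,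
    List.sum_append, Option.toList_some, List.map_singleton, List.sum_singleton]

lemma posSeq_cons_succ (a : Fin 6) (s : List (Fin 6)) (m : ℕ) :
    posSeq (a :: s) (m + 1) = dirU a + posSeq s m := by
  simp [posSeq]

lemma posSeq_append_of_le {s : List (Fin 6)} (t : List (Fin 6)) {m : ℕ} (hm : m ≤ s.length) :
    posSeq (s ++ t) m = posSeq s m := by
  rw [posSeq, List.take_append_of_le_length hm, posSeq]

lemma posSeq_append_singleton (s : List (Fin 6)) (c : Fin 6) :
    posSeq (s ++ [c]) (s.length + 1) = posSeq s s.length + dirU c := by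
  simp [posSeq]

lemma getElem_succ_ne_add_three {s : List (Fin 6)} (hs : Set.InjOn (posSeq s) (Set.Iic s.length))
    {k : ℕ} (hk : k + 1 < s.length) : s[k + 1] ≠ s[k] + 3 := by
  intro h
  have hback : posSeq s (k + 1 + 1) = posSeq s k := by
    rw [posSeq_succ hk, posSeq_succ (by omega), h, dirU_add_three]
    ring
  have := hs (Set.mem_Iic.mpr (by omega)) (Set.mem_Iic.mpr (by omega)) hback
  omega

def phiMap (s : List (Fin 6)) : List (Fin 6) :=
  (s.zip s.tail).map fun p => (phiTable p.1 p.2).getD 0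

lemma length_phiMap (s : List (Fin 6)) : (phiMap s).length = s.length - 1 := by
  simp [phiMap]

lemma getElem_phiMap {s : List (Fin 6)} {k : ℕ} (hk : k < (phiMap s).length) :
    (phiMap s)[k] = (phiTable (s[k]'(by rw [length_phiMap] at hk; omega))
      (s[k + 1]'(by rw [length_phiMap] at hk; omega))).getD 0 := by
  simp [phiMap]

lemma posSeq_phiMap {s : List (Fin 6)}
    (hs : ∀ k (hk : k + 1 < s.length), (phiTable s[k] s[k + 1]).isSome) {m : ℕ}
    (hm : m < s.length) :
    posSeq (phiMap s) m + tileOffset s[0] + dirU s[0] = posSeq s (m + 1) + tileOffset s[m] := by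
  induction m with
  | zero =>
    rw [posSeq_zero, posSeq_succ hm, posSeq_zero]
    ring
  | succ m ih =>
    have hm' : m < (phiMap s).length := by rw [length_phiMap]; omega
    rw [posSeq_succ hm', getElem_phiMap, dirU_phiTable (hs m hm), posSeq_succ hm]
    linear_combination ih (by omega)

lemma one_le_triNum {n : ℕ} (hn : 1 ≤ n) : 1 ≤ triNum n := by
  rw [triNum, Nat.le_div_iff_mul_le two_pos]
  nlinarith

lemma isSPath_of_isSideOf {n : ℕ} {s : List (Fin 6)} (hlen : s.length = triNum n)
    (hend : posSeq s s.length = n * dirU 0)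
    (t : Fin s.length → {p : ℕ × ℕ // p.1 + p.2 ≤ n - 1})
    (hside : ∀ m : Fin s.length, IsSideOf (edgeSeg s m) (t m).1.1 (t m).1.2)
    (ht : Function.Bijective t) :
    IsSPath n s := by
  refine ⟨hlen, posSeq_zero s, hend, fun m m' h => ht.1 ?_, t, hside, ht⟩
  have hcoord := (hside m).unique (h ▸ hside m')
  exact Subtype.ext (Prod.ext hcoord.1 hcoord.2)

section HPath

variable {n : ℕ} {w : List (Fin 6)}

lemma IsHPath.posSeq_mem (hw : IsHPath n w) {m : ℕ} (hm : m ≤ w.length) :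
    posSeq w m ∈ inscribedGrid n :=
  hw.2.2.1 ▸ ⟨⟨m, Nat.lt_succ_of_le hm⟩, rfl⟩

lemma IsHPath.injOn (hw : IsHPath n w) : Set.InjOn (posSeq w) (Set.Iic w.length) :=
  fun m hm m' hm' h => congrArg Fin.val
    (hw.2.1 (a₁ := ⟨m, Nat.lt_succ_of_le hm⟩) (a₂ := ⟨m', Nat.lt_succ_of_le hm'⟩) h)

lemma IsHPath.exists_bijective_coords (hw : IsHPath n w) :
    ∃ t : Fin (w.length + 1) → {p : ℕ × ℕ // p.1 + p.2 ≤ n - 1},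
      Function.Bijective t ∧ ∀ m : Fin (w.length + 1), posSeq w m = Pt (t m).1.1 (t m).1.2 := by
  let grid : {p : ℕ × ℕ // p.1 + p.2 ≤ n - 1} ≃ inscribedGrid n :=
    Equiv.ofBijective (fun p => ⟨Pt p.1.1 p.1.2, p.1.1, p.1.2, p.2, rfl⟩)
      ⟨fun p q h => Subtype.ext (Prod.ext_iff.mpr (Pt_inj.mp (congrArg Subtype.val h))),
        fun ⟨_, i, j, hij, hp⟩ => ⟨⟨(i, j), hij⟩, Subtype.ext hp.symm⟩⟩
  let vertex : Fin (w.length + 1) ≃ inscribedGrid n :=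
    Equiv.ofBijective (fun m => ⟨posSeq w m, hw.posSeq_mem (Nat.lt_succ_iff.mp m.2)⟩)
      ⟨fun m m' h => hw.2.1 (congrArg Subtype.val h),
        fun ⟨p, hp⟩ => by
          obtain ⟨m, rfl⟩ := hw.2.2.1.symm ▸ hp
          exact ⟨m, rfl⟩⟩
  refine ⟨vertex.trans grid.symm, Equiv.bijective _, fun m => ?_⟩
  exact (congrArg Subtype.val (grid.apply_symm_apply (vertex m))).symm

lemma posSeq_supp_succ {m : ℕ} (hm : m ≤ w.length) :
    posSeq (0 :: (w ++ [0])) (m + 1) = posSeq w m + 1 := by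
  rw [posSeq_cons_succ, posSeq_append_of_le _ hm, dirU_zero, add_comm]

/-- The supplemented word visits `Pt 0 0`, then the H-path shifted by `1` (first coordinate
in `[1, n]`), then `Pt (n + 1) 0`. -/
lemma IsHPath.injOn_posSeq_supp (hw : IsHPath n w) (hn : 1 ≤ n) :
    Set.InjOn (posSeq (0 :: (w ++ [0]))) (Set.Iic (0 :: (w ++ [0])).length) := by
  have hcoord : ∀ k ≤ w.length + 2, ∃ i j, posSeq (0 :: (w ++ [0])) k = Pt i j ∧
      (k = 0 ↔ i = 0) ∧ (k = w.length + 2 ↔ i = n + 1) := by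
    intro k hk
    rcases k with _ | m
    · exact ⟨0, 0, by rw [posSeq_zero, Pt_eq]; simp, by simp, by omega⟩
    obtain rfl | hm := eq_or_lt_of_le (Nat.le_of_succ_le_succ hk)
    · refine ⟨n + 1, 0, ?_, by omega, by simp⟩
      rw [posSeq_cons_succ, posSeq_append_singleton, hw.2.2.2.2, dirU_zero, add_comm,
        Pt_add_one, Pt_add_one, Nat.sub_add_cancel hn]
    · obtain ⟨i, j, hij, hp⟩ := hw.posSeq_mem (Nat.lt_succ_iff.mp hm)
      exact ⟨i + 1, j, by rw [posSeq_supp_succ (by omega), hp, Pt_add_one], by simp,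
        by omega⟩
  intro k hk k' hk' h
  simp only [List.length_cons, List.length_append, List.length_nil, Set.mem_Iic] at hk hk'
  obtain ⟨i, j, hp, hi0, hin⟩ := hcoord k hk
  obtain ⟨i', j', hp', hi0', hin'⟩ := hcoord k' hk'
  have hii' := (Pt_inj.mp (hp ▸ hp' ▸ h)).1
  rcases k with _ | m
  · omega
  rcases k' with _ | m'
  · omega
  by_cases hlast : m = w.length + 1 ∨ m' = w.length + 1
  · omega
  rw [posSeq_supp_succ (by omega), posSeq_supp_succ (by omega), add_left_inj] at h
  have := hw.injOn (Set.mem_Iic.mpr (by omega)) (Set.mem_Iic.mpr (by omega)) h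
  omega

end HPath

lemma suppPairs_eq (w : List (Fin 6)) :
    suppPairs w = (0 :: (w ++ [0])).zip (0 :: (w ++ [0])).tail := rfl

lemma phiWord_eq_phiMap (w : List (Fin 6)) : PhiWord w = phiMap (0 :: (w ++ [0])) := rfl

lemma length_phiWord (w : List (Fin 6)) : (PhiWord w).length = w.length + 1 := by
  simp [phiWord_eq_phiMap, length_phiMap]

section WPath

variable {n : ℕ} {w : List (Fin 6)}

lemma IsWPath.phiTable_isSome (hw : IsWPath n w) (hn : 1 ≤ n) {k : ℕ}
    (hk : k + 1 < (0 :: (w ++ [0])).length) :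
    (phiTable (0 :: (w ++ [0]))[k] (0 :: (w ++ [0]))[k + 1]).isSome :=
  (phiTable_isSome_or _ _).resolve_right <| not_or_intro
    (getElem_succ_ne_add_three (hw.1.injOn_posSeq_supp hn) hk) (hw.2.getElem k hk)

lemma IsWPath.posSeq_phiWord (hw : IsWPath n w) (hn : 1 ≤ n) {m : ℕ} (hm : m ≤ w.length + 1) :
    posSeq (PhiWord w) m =
      posSeq (w ++ [0]) m + tileOffset ((0 :: (w ++ [0]))[m]'(by simp; omega)) := by
  have h := posSeq_phiMap (fun k hk => hw.phiTable_isSome hn hk) (m := m) (by simp; omega)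
  rw [posSeq_cons_succ, List.getElem_cons_zero, dirU_zero, show tileOffset 0 = 0 from rfl] at h
  rw [phiWord_eq_phiMap]
  linear_combination h

lemma IsWPath.isSideOf_edgeSeg_phiWord (hw : IsWPath n w) (hn : 1 ≤ n) {m : ℕ}
    (hm : m ≤ w.length) {i j : ℕ} (hp : posSeq w m = Pt i j) :
    IsSideOf (edgeSeg (PhiWord w) m) i j := by
  have hm' : m < (PhiWord w).length := by rw [length_phiWord]; omega
  have hoff := tileOffset_phiTable (hw.phiTable_isSome hn (k := m) (by simp; omega))
  rw [← getElem_phiMap (s := 0 :: (w ++ [0])) hm'] at hoff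
  rw [edgeSeg, posSeq_succ hm', hw.posSeq_phiWord hn (by omega), posSeq_append_of_le _ hm, hp,
    ← hoff]
  exact isSideOf_step _ i j

lemma IsWPath.posSeq_phiWord_length (hw : IsWPath n w) (hn : 1 ≤ n) :
    posSeq (PhiWord w) (PhiWord w).length = n * dirU 0 := by
  rw [length_phiWord, hw.posSeq_phiWord hn le_rfl, posSeq_append_singleton, hw.1.2.2.2.2]
  have hlast : (0 :: (w ++ [0]))[w.length + 1] = 0 := by simp
  rw [hlast, dirU_zero, Pt_add_one, Nat.sub_add_cancel hn, Pt_eq]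
  simp [tileOffset]

end WPath

/-- For every `n ≥ 2` and every W-path `w` of order `n`, `φ` is defined
on all consecutive pairs of the supplemented word `0·w·0` and the resulting word `Φ(w)`
is an S-path of order `n`. -/
theorem phiWord_isSPath (n : ℕ) (hn : 2 ≤ n) (w : List (Fin 6)) (hw : IsWPath n w) :
    (∀ p ∈ suppPairs w, (phiTable p.1 p.2).isSome) ∧ IsSPath n (PhiWord w) := by
  have hn₁ : 1 ≤ n := by omega
  have hlen := length_phiWord w
  have hlen_tri : (PhiWord w).length = triNum n := by
    have := one_le_triNum hn₁
    rw [hlen, hw.1.1]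
    omega
  obtain ⟨t, ht, hpt⟩ := hw.1.exists_bijective_coords
  constructor
  · rw [suppPairs_eq]
    exact forall_mem_zip_tail_of_getElem (R := fun a b => (phiTable a b).isSome)
      fun k hk => hw.phiTable_isSome hn₁ hk
  · exact isSPath_of_isSideOf hlen_tri (hw.posSeq_phiWord_length hn₁) (t ∘ Fin.cast hlen)
      (fun m => hw.isSideOf_edgeSeg_phiWord hn₁ (by omega) (hpt (Fin.cast hlen m)))
      (ht.comp (Fin.castOrderIso hlen).bijective)
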